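/- Let s ∈ ℂ with Re(s) > 1, let n ∈ ℕ, and let r ∈ ℂ be either real or purely imaginary with |r| ≤ 1/2. Then H(r, g_s) = [2^{−2n} (s)_{2n} / ((s/2 − 1/4 − ir/2)_n · (s/2 − 1/4 + ir/2)_n)] · H(r, g_{s+2n}), where H(r,g) := 2∫₀^∞ cos(ur) g(u) du, g_s(u) := 2^{1/2}√π (Γ(s−1/2)/Γ(s)) cosh(u)^{−(s−1/2)}, and (a)_n := a(a+1)⋯(a+n−1) denotes the Pochhammer symbol. -/

import Mathlib

open MeasureTheory Set

/-- `H(r,g) := 2 ∫₀^∞ cos(ur) g(u) du`. -/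
noncomputable def waveH (r : ℂ) (g : ℝ → ℂ) : ℂ :=
  2 * ∫ u in Set.Ioi (0 : ℝ), Complex.cos (u * r) * g u

/-- The test function `g_s(u) = 2^{1/2} √π (Γ(s-1/2)/Γ(s)) cosh(u)^{-(s-1/2)}`. -/
noncomputable def gTest (s : ℂ) (u : ℝ) : ℂ :=
  (2 : ℂ) ^ ((1 / 2 : ℂ)) * (Real.sqrt Real.pi : ℂ) *
    (Complex.Gamma (s - 1 / 2) / Complex.Gamma s) *
      ((Real.cosh u : ℂ) ^ (-(s - 1 / 2)))

/-!
Write `J_β(r) = ∫₀^∞ cos(ur) cosh(u)^{-β} du`, so that `H(r, g_s)` is `Γ(s - 1/2)/Γ(s)` times a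
constant times `J_{s-1/2}(r)`. Integrating by parts against
`φ(u) = (β cos(ur) tanh u - r sin(ur)) cosh(u)^{-β}`, which vanishes at `0` and decays at `∞` as
long as `|Im r| < Re β`, gives the three-term relation `β(β+1) J_{β+2} = (β² + r²) J_β`. Since
`β² + r² = 4 (β/2 - ir/2)(β/2 + ir/2)`, iterating it `n` times gives
`4ⁿ (β/2 - ir/2)_n (β/2 + ir/2)_n J_β = (β)_{2n} J_{β+2n}`, while `Γ(z + m) = (z)_m Γ(z)` turns the
change of Gamma ratio from `s` to `s + 2n` into `(s - 1/2)_{2n}/(s)_{2n}`.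
-/

open Filter Topology Complex

namespace Complex

lemma norm_exp_mul_I_le (z : ℂ) : ‖exp (z * I)‖ ≤ Real.exp |z.im| := by
  rw [norm_exp]
  exact Real.exp_le_exp.2 (by simpa using neg_le_abs z.im)

lemma norm_cos_le_exp_abs_im (z : ℂ) : ‖cos z‖ ≤ Real.exp |z.im| := by
  have h₁ := norm_exp_mul_I_le z
  have h₂ := norm_exp_mul_I_le (-z)
  rw [neg_im, abs_neg] at h₂
  calc ‖cos z‖ = ‖exp (z * I) + exp (-z * I)‖ / 2 := by rw [cos, norm_div, RCLike.norm_ofNat]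
    _ ≤ (‖exp (z * I)‖ + ‖exp (-z * I)‖) / 2 := by gcongr; exact norm_add_le _ _
    _ ≤ Real.exp |z.im| := by linarith

lemma norm_sin_le_exp_abs_im (z : ℂ) : ‖sin z‖ ≤ Real.exp |z.im| := by
  have h₁ := norm_exp_mul_I_le z
  have h₂ := norm_exp_mul_I_le (-z)
  rw [neg_im, abs_neg] at h₂
  calc ‖sin z‖ = ‖exp (-z * I) - exp (z * I)‖ / 2 := by
        rw [sin, norm_div, norm_mul, norm_I, mul_one, RCLike.norm_ofNat]
    _ ≤ (‖exp (-z * I)‖ + ‖exp (z * I)‖) / 2 := by gcongr; exact norm_sub_le _ _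
    _ ≤ Real.exp |z.im| := by linarith

lemma abs_im_ofReal_mul {u : ℝ} (hu : 0 ≤ u) (r : ℂ) : |((u : ℂ) * r).im| = |r.im| * u := by
  rw [im_ofReal_mul, abs_mul, abs_of_nonneg hu, mul_comm]

lemma ne_neg_natCast_of_re_pos {z : ℂ} (hz : 0 < z.re) (k : ℕ) : z ≠ -k := by
  rintro rfl
  simp only [neg_re, natCast_re, Left.neg_pos_iff] at hz
  exact (Nat.cast_nonneg k).not_gt hz

lemma ascPochhammer_eval_ne_zero_of_re_pos {z : ℂ} (hz : 0 < z.re) (n : ℕ) :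
    (ascPochhammer ℂ n).eval z ≠ 0 := by
  rw [Ne, ascPochhammer_eval_eq_zero_iff]
  rintro ⟨k, -, hk⟩
  exact ne_neg_natCast_of_re_pos hz k (by rw [hk, neg_neg])

lemma Gamma_add_nat_eq_mul_Gamma {z : ℂ} (hz : 0 < z.re) (n : ℕ) :
    Gamma (z + n) = (ascPochhammer ℂ n).eval z * Gamma z := by
  rw [← Gamma_add_nat_div_Gamma_eq z (ne_neg_natCast_of_re_pos hz),
    div_mul_cancel₀ _ (Gamma_ne_zero_of_re_pos hz)]

lemma Gamma_add_nat_div_Gamma_add_nat_mul {z w : ℂ} (hz : 0 < z.re) (hw : 0 < w.re) (n : ℕ) :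
    Gamma (z + n) / Gamma (w + n) * (ascPochhammer ℂ n).eval w
      = Gamma z / Gamma w * (ascPochhammer ℂ n).eval z := by
  have hΓ := Gamma_ne_zero_of_re_pos hw
  have hpoch := ascPochhammer_eval_ne_zero_of_re_pos hw n
  rw [Gamma_add_nat_eq_mul_Gamma hz, Gamma_add_nat_eq_mul_Gamma hw]
  field_simp

end Complex

lemma Real.cosh_rpow_neg_le {g : ℝ} (hg : 0 ≤ g) (u : ℝ) :
    Real.cosh u ^ (-g) ≤ 2 ^ g * Real.exp (-(g * u)) := by
  have hpos : 0 < Real.exp u / 2 := by positivity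
  have hle : Real.exp u / 2 ≤ Real.cosh u := by
    rw [Real.cosh_eq]
    linarith [Real.exp_pos (-u)]
  calc Real.cosh u ^ (-g) ≤ (Real.exp u / 2) ^ (-g) :=
        Real.rpow_le_rpow_of_nonpos hpos hle (neg_nonpos.2 hg)
    _ = 2 ^ g * Real.exp (-(g * u)) := by
        rw [Real.div_rpow (Real.exp_pos u).le zero_le_two, ← Real.exp_mul,
          Real.rpow_neg zero_le_two, div_inv_eq_mul, mul_comm, mul_comm u, neg_mul]

lemma norm_mul_cosh_cpow_neg_le {β t : ℂ} {K c u : ℝ} (hβ : 0 ≤ β.re)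
    (ht : ‖t‖ ≤ K * Real.exp (c * u)) :
    ‖t * (Real.cosh u : ℂ) ^ (-β)‖ ≤ K * (2 ^ β.re * Real.exp (-(β.re - c) * u)) := by
  have hcosh : ‖(Real.cosh u : ℂ) ^ (-β)‖ ≤ 2 ^ β.re * Real.exp (-(β.re * u)) := by
    rw [norm_cpow_eq_rpow_re_of_pos (Real.cosh_pos u), neg_re]
    exact Real.cosh_rpow_neg_le hβ u
  calc ‖t * (Real.cosh u : ℂ) ^ (-β)‖
      ≤ K * Real.exp (c * u) * (2 ^ β.re * Real.exp (-(β.re * u))) := by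
        rw [norm_mul]
        exact mul_le_mul ht hcosh (norm_nonneg _) ((norm_nonneg _).trans ht)
    _ = K * (2 ^ β.re * Real.exp (-(β.re - c) * u)) := by
        rw [mul_assoc, mul_left_comm (Real.exp _), ← Real.exp_add]
        ring_nf

lemma hasDerivAt_ofReal_tanh (u : ℝ) :
    HasDerivAt (fun u : ℝ => (Real.tanh u : ℂ)) (1 - (Real.tanh u : ℂ) ^ 2) u := by
  have h := (Real.hasDerivAt_sinh u).div (Real.hasDerivAt_cosh u) (Real.cosh_pos u).ne'
  have hderiv : (Real.cosh u * Real.cosh u - Real.sinh u * Real.sinh u) / Real.cosh u ^ 2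
      = 1 - Real.tanh u ^ 2 := by
    have := (Real.cosh_pos u).ne'
    rw [Real.tanh_eq_sinh_div_cosh]
    field_simp
  have hfun : Real.sinh / Real.cosh = Real.tanh :=
    funext fun x => (Real.tanh_eq_sinh_div_cosh x).symm
  rw [hfun, hderiv] at h
  simpa using h.ofReal_comp

lemma hasDerivAt_cosh_cpow_neg (β : ℂ) (u : ℝ) :
    HasDerivAt (fun u : ℝ => (Real.cosh u : ℂ) ^ (-β))
      (-β * Real.tanh u * (Real.cosh u : ℂ) ^ (-β)) u := by
  have hslit : ((Real.cosh u : ℝ) : ℂ) ∈ slitPlane := ofReal_mem_slitPlane.2 (Real.cosh_pos u)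
  have h := (hasStrictDerivAt_cpow_const (c := -β) hslit).hasDerivAt.comp u
    (Real.hasDerivAt_cosh u).ofReal_comp
  have hch : (Real.cosh u : ℂ) ≠ 0 := ofReal_ne_zero.2 (Real.cosh_pos u).ne'
  refine h.congr_deriv ?_
  rw [cpow_sub _ _ hch, cpow_one, Real.tanh_eq_sinh_div_cosh, ofReal_div]
  ring

lemma cosh_cpow_neg_add_two (β : ℂ) (u : ℝ) :
    (Real.cosh u : ℂ) ^ (-(β + 2)) = (1 - (Real.tanh u : ℂ) ^ 2) * (Real.cosh u : ℂ) ^ (-β) := by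
  have hch : (Real.cosh u : ℂ) ≠ 0 := ofReal_ne_zero.2 (Real.cosh_pos u).ne'
  have hpyth : (Real.cosh u : ℂ) ^ 2 - (Real.sinh u : ℂ) ^ 2 = 1 := by
    exact_mod_cast Real.cosh_sq_sub_sinh_sq u
  rw [neg_add, ← sub_eq_add_neg, cpow_sub _ _ hch, cpow_ofNat, Real.tanh_eq_sinh_div_cosh,
    ofReal_div, div_pow, one_sub_div (pow_ne_zero 2 hch), hpyth]
  ring

lemma continuous_cosh_cpow_neg (β : ℂ) : Continuous fun u : ℝ => (Real.cosh u : ℂ) ^ (-β) :=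
  continuous_iff_continuousAt.2 fun u => (hasDerivAt_cosh_cpow_neg β u).continuousAt

noncomputable def cosCoshIntegral (r β : ℂ) : ℂ :=
  ∫ u in Ioi (0 : ℝ), cos (u * r) * (Real.cosh u : ℂ) ^ (-β)

lemma integrableOn_cos_mul_cosh_cpow_neg {r β : ℂ} (h : |r.im| < β.re) :
    IntegrableOn (fun u : ℝ => cos (u * r) * (Real.cosh u : ℂ) ^ (-β)) (Ioi 0) := by
  have hβ : 0 ≤ β.re := (abs_nonneg _).trans h.le
  refine Integrable.mono' ((exp_neg_integrableOn_Ioi 0 (sub_pos.2 h)).const_mul (2 ^ β.re))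
    ((by fun_prop : Continuous fun u : ℝ => cos (u * r)).mul
      (continuous_cosh_cpow_neg β)).aestronglyMeasurable.restrict ?_
  refine (ae_restrict_iff' measurableSet_Ioi).2 (ae_of_all _ fun u hu => ?_)
  have hcos : ‖cos (u * r)‖ ≤ 1 * Real.exp (|r.im| * u) := by
    rw [one_mul, ← abs_im_ofReal_mul (le_of_lt hu)]
    exact norm_cos_le_exp_abs_im _
  simpa only [one_mul] using norm_mul_cosh_cpow_neg_le hβ hcos

noncomputable def cosCoshPrimitive (r β : ℂ) (u : ℝ) : ℂ :=
  (β * cos (u * r) * Real.tanh u - r * sin (u * r)) * (Real.cosh u : ℂ) ^ (-β)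

lemma hasDerivAt_cosCoshPrimitive (r β : ℂ) (u : ℝ) :
    HasDerivAt (cosCoshPrimitive r β)
      (β * (β + 1) * (cos (u * r) * (Real.cosh u : ℂ) ^ (-(β + 2)))
        - (β ^ 2 + r ^ 2) * (cos (u * r) * (Real.cosh u : ℂ) ^ (-β))) u := by
  have hmul : HasDerivAt (fun u : ℝ => (u : ℂ) * r) r u := by
    simpa using (hasDerivAt_id u).ofReal_comp.mul_const r
  have hcos := (hasDerivAt_cos _).comp u hmul
  have hsin := (hasDerivAt_sin _).comp u hmul
  have h := (((hcos.const_mul β).mul (hasDerivAt_ofReal_tanh u)).sub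
    (hsin.const_mul r)).mul (hasDerivAt_cosh_cpow_neg β u)
  refine h.congr_deriv ?_
  simp only [Pi.mul_apply, Pi.sub_apply, Function.comp_apply]
  rw [cosh_cpow_neg_add_two]
  ring

lemma norm_cosCoshPrimitive_le {r β : ℂ} (hβ : 0 ≤ β.re) {u : ℝ} (hu : 0 ≤ u) :
    ‖cosCoshPrimitive r β u‖ ≤ (‖β‖ + ‖r‖) * (2 ^ β.re * Real.exp (-(β.re - |r.im|) * u)) := by
  refine norm_mul_cosh_cpow_neg_le hβ ?_
  have hcos := norm_cos_le_exp_abs_im (u * r)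
  have hsin := norm_sin_le_exp_abs_im (u * r)
  have htanh : ‖(Real.tanh u : ℂ)‖ ≤ 1 := by
    rw [norm_real, Real.norm_eq_abs]
    exact (Real.abs_tanh_lt_one u).le
  rw [abs_im_ofReal_mul hu] at hcos hsin
  calc ‖β * cos (u * r) * Real.tanh u - r * sin (u * r)‖
      ≤ ‖β‖ * ‖cos (u * r)‖ * ‖(Real.tanh u : ℂ)‖ + ‖r‖ * ‖sin (u * r)‖ := by
        refine (norm_sub_le _ _).trans_eq ?_
        rw [norm_mul, norm_mul, norm_mul]
    _ ≤ ‖β‖ * Real.exp (|r.im| * u) * 1 + ‖r‖ * Real.exp (|r.im| * u) := by gcongr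
    _ = (‖β‖ + ‖r‖) * Real.exp (|r.im| * u) := by ring

lemma tendsto_cosCoshPrimitive_atTop {r β : ℂ} (h : |r.im| < β.re) :
    Tendsto (cosCoshPrimitive r β) atTop (𝓝 0) := by
  have hβ : 0 ≤ β.re := (abs_nonneg _).trans h.le
  have hdecay : Tendsto (fun u : ℝ => Real.exp (-(β.re - |r.im|) * u)) atTop (𝓝 0) :=
    Real.tendsto_exp_atBot.comp
      (tendsto_id.const_mul_atTop_of_neg (neg_neg_of_pos (sub_pos.2 h)))
  refine squeeze_zero_norm' (eventually_ge_atTop 0 |>.mono fun u hu =>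
    norm_cosCoshPrimitive_le hβ hu) ?_
  simpa using (hdecay.const_mul (2 ^ β.re)).const_mul (‖β‖ + ‖r‖)

lemma mul_cosCoshIntegral_add_two {r β : ℂ} (h : |r.im| < β.re) :
    β * (β + 1) * cosCoshIntegral r (β + 2) = (β ^ 2 + r ^ 2) * cosCoshIntegral r β := by
  have h₂ : |r.im| < (β + 2).re := by rw [add_re, re_ofNat]; linarith
  have hint₂ := (integrableOn_cos_mul_cosh_cpow_neg h₂).const_mul (β * (β + 1))
  have hint := (integrableOn_cos_mul_cosh_cpow_neg h).const_mul (β ^ 2 + r ^ 2)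
  have hFTC := integral_Ioi_of_hasDerivAt_of_tendsto
    (hasDerivAt_cosCoshPrimitive r β 0).continuousAt.continuousWithinAt
    (fun u _ => hasDerivAt_cosCoshPrimitive r β u) (hint₂.sub hint)
    (tendsto_cosCoshPrimitive_atTop h)
  rw [integral_sub hint₂ hint, integral_const_mul, integral_const_mul] at hFTC
  simp only [cosCoshPrimitive, ofReal_zero, zero_mul, sin_zero, Real.tanh_zero, mul_zero,
    sub_zero] at hFTC
  unfold cosCoshIntegral
  linear_combination hFTC

lemma pochhammer_mul_cosCoshIntegral {r β : ℂ} (h : |r.im| < β.re) (n : ℕ) :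
    4 ^ n * (ascPochhammer ℂ n).eval (β / 2 - I * r / 2)
        * (ascPochhammer ℂ n).eval (β / 2 + I * r / 2) * cosCoshIntegral r β
      = (ascPochhammer ℂ (2 * n)).eval β * cosCoshIntegral r (β + 2 * n) := by
  induction n generalizing β with
  | zero => simp
  | succ n ih =>
    have h₂ : |r.im| < (β + 2).re := by rw [add_re, re_ofNat]; linarith
    have hrel := mul_cosCoshIntegral_add_two h
    have hshift := ih h₂
    rw [show (β + 2) / 2 - I * r / 2 = β / 2 - I * r / 2 + 1 by ring,
      show (β + 2) / 2 + I * r / 2 = β / 2 + I * r / 2 + 1 by ring,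
      show β + 2 + 2 * (n : ℂ) = β + 2 * (n + 1 : ℕ) by push_cast; ring] at hshift
    rw [show 2 * (n + 1) = 2 * n + 1 + 1 by ring]
    simp only [ascPochhammer_succ_left, Polynomial.eval_mul, Polynomial.eval_X,
      Polynomial.eval_comp, Polynomial.eval_add, Polynomial.eval_one] at hshift ⊢
    rw [show β + 1 + 1 = β + 2 by ring]
    set A := (ascPochhammer ℂ n).eval (β / 2 - I * r / 2 + 1)
    set B := (ascPochhammer ℂ n).eval (β / 2 + I * r / 2 + 1)
    linear_combination β * (β + 1) * hshift - 4 ^ n * A * B * hrel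
      - 4 ^ n * A * B * cosCoshIntegral r β * r ^ 2 * I_sq

lemma cosCoshIntegral_eq_pochhammer_div {r β : ℂ} (h : |r.im| < β.re) (n : ℕ) :
    cosCoshIntegral r β = (ascPochhammer ℂ (2 * n)).eval β * cosCoshIntegral r (β + 2 * n)
      / (4 ^ n * (ascPochhammer ℂ n).eval (β / 2 - I * r / 2)
        * (ascPochhammer ℂ n).eval (β / 2 + I * r / 2)) := by
  have hre := abs_lt.1 h
  have hA : (ascPochhammer ℂ n).eval (β / 2 - I * r / 2) ≠ 0 := by
    refine ascPochhammer_eval_ne_zero_of_re_pos ?_ n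
    simp only [sub_re, div_ofNat_re, mul_re, I_re, I_im, zero_mul, one_mul, zero_sub]
    linarith
  have hB : (ascPochhammer ℂ n).eval (β / 2 + I * r / 2) ≠ 0 := by
    refine ascPochhammer_eval_ne_zero_of_re_pos ?_ n
    simp only [add_re, div_ofNat_re, mul_re, I_re, I_im, zero_mul, one_mul, zero_sub]
    linarith
  rw [eq_div_iff (mul_ne_zero (mul_ne_zero (pow_ne_zero n (by norm_num)) hA) hB)]
  linear_combination pochhammer_mul_cosCoshIntegral h n

lemma waveH_gTest (r s : ℂ) :
    waveH r (gTest s) = 2 * ((2 : ℂ) ^ (1 / 2 : ℂ) * (Real.sqrt Real.pi : ℂ)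
      * (Gamma (s - 1 / 2) / Gamma s)) * cosCoshIntegral r (s - 1 / 2) := by
  simp only [waveH, cosCoshIntegral, gTest, ← integral_const_mul]
  congr 1
  funext u
  ring

lemma two_cpow_neg_two_mul (n : ℕ) : (2 : ℂ) ^ (-(2 * n : ℂ)) = ((4 : ℂ) ^ n)⁻¹ := by
  rw [cpow_neg, show (2 * n : ℂ) = ((2 * n : ℕ) : ℂ) by push_cast; ring, cpow_natCast, pow_mul]
  norm_num

theorem statement4 (s : ℂ) (hs : 1 < s.re) (n : ℕ) (r : ℂ)
    (hr : r.im = 0 ∨ (r.re = 0 ∧ ‖r‖ ≤ 1 / 2)) :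
    waveH r (gTest s)
      = (2 : ℂ) ^ (-(2 * n : ℂ)) * (ascPochhammer ℂ (2 * n)).eval s /
          ((ascPochhammer ℂ n).eval (s / 2 - 1 / 4 - Complex.I * r / 2) *
            (ascPochhammer ℂ n).eval (s / 2 - 1 / 4 + Complex.I * r / 2)) *
        waveH r (gTest (s + 2 * n)) := by
  have him : |r.im| ≤ 1 / 2 := by
    rcases hr with h | ⟨-, h⟩
    · simp [h]
    · exact (abs_im_le_norm r).trans h
  rw [waveH_gTest, waveH_gTest, two_cpow_neg_two_mul,
    show s + 2 * n - 1 / 2 = s - 1 / 2 + 2 * n by ring,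
    show s / 2 - 1 / 4 = (s - 1 / 2) / 2 by ring]
  set β := s - 1 / 2 with hβ
  have hβre : |r.im| < β.re := by
    simp only [hβ, one_div, sub_re, inv_re, re_ofNat, normSq_ofNat, div_self_mul_self']
    linarith
  have hΓ := Gamma_add_nat_div_Gamma_add_nat_mul ((abs_nonneg _).trans_lt hβre)
    (by linarith : 0 < s.re) (2 * n)
  push_cast at hΓ
  rw [cosCoshIntegral_eq_pochhammer_div hβre n]
  linear_combination -(2 * ((2 : ℂ) ^ (1 / 2 : ℂ) * (Real.sqrt Real.pi : ℂ))
    * cosCoshIntegral r (β + 2 * n) / (4 ^ n * (ascPochhammer ℂ n).eval (β / 2 - I * r / 2)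
      * (ascPochhammer ℂ n).eval (β / 2 + I * r / 2))) * hΓ
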